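/- Let λ > 0 and let Q be the intensity matrix of the front process on the ladder with diagonals. Suppose π : ℕ → ℝ is nonnegative and summable with ∑_{j=0}^∞ π_j = 1, and suppose that for every column j ∈ ℕ the series ∑_{i=0}^∞ π_i·Q(i,j) converges absolutely to 0. Then: π_1 = (5+λ)·π_0 − (1+λ); π_2 = (28+17λ+2λ²)·π_0 − (8+9λ+2λ²); π_3 = (226+226λ+68λ²+6λ³)·π_0 − (66+98λ+44λ²+6λ³); and for every n ≥ 4, π_n = ((2+λ)n+3)·π_{n−1} − ((2+λ)(n−2)+4)·π_{n−2} + 2·π_{n−3}. -/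
import Mathlib


/-- Intensity matrix of the front process on the ladder with diagonals, vertical
intensity `l`: `Q(0,0) = −4`, `Q(0,1) = 4`, `Q(0,j) = 0` for `j ≥ 2`;
`Q(1,0) = 2+l`, `Q(1,1) = −(4+l)`, `Q(1,2) = 2`, `Q(1,j) = 0` for `j ≥ 3`;
and for `i ≥ 2`: `Q(i,0) = 1+l`, `Q(i,j) = 2+l` for `1 ≤ j ≤ i−2`,
`Q(i,i−1) = 3+l`, `Q(i,i) = −(2+2i+il)`, `Q(i,i+1) = 2`, `Q(i,j) = 0` for `j ≥ i+2`. -/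
noncomputable def diagQ (l : ℝ) (i j : ℕ) : ℝ :=
  if i = 0 then (if j = 0 then -4 else if j = 1 then 4 else 0)
  else if i = 1 then
    (if j = 0 then 2 + l else if j = 1 then -(4 + l) else if j = 2 then 2 else 0)
  else if j = 0 then 1 + l
  else if j + 2 ≤ i then 2 + l
  else if j + 1 = i then 3 + l
  else if j = i then -(2 + 2 * (i : ℝ) + (i : ℝ) * l)
  else if j = i + 1 then 2
  else 0

/-- Column equation: splitting the stationary tsum for column `j` at index `j+2`,
where the matrix entry is the constant `c`. -/
lemma diagQ_colEq (l : ℝ) (π : ℕ → ℝ) (hsummable : Summable π) (hsum : ∑' n, π n = 1)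
    (j : ℕ) (hqS : Summable (fun i => π i * diagQ l i j))
    (hq : ∑' i, π i * diagQ l i j = 0)
    (c : ℝ) (hc : ∀ i : ℕ, diagQ l (i + (j + 2)) j = c) :
    (∑ i ∈ Finset.range (j + 2), π i * diagQ l i j)
      + c * (1 - ∑ i ∈ Finset.range (j + 2), π i) = 0 := by
  have h1 := Summable.sum_add_tsum_nat_add (f := fun i => π i * diagQ l i j) (j + 2) hqS
  have h2 := Summable.sum_add_tsum_nat_add (f := π) (j + 2) hsummable
  rw [hq] at h1
  rw [hsum] at h2
  have h3 : ∑' i : ℕ, π (i + (j + 2)) * diagQ l (i + (j + 2)) j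
      = c * ∑' i : ℕ, π (i + (j + 2)) := by
    rw [← tsum_mul_left]
    exact tsum_congr fun i => by rw [hc i]; ring
  rw [h3] at h1
  have hT : ∑' i : ℕ, π (i + (j + 2)) = 1 - ∑ i ∈ Finset.range (j + 2), π i := by
    linarith
  rw [hT] at h1
  simpa using h1


lemma diagQ_tail0 (l : ℝ) (i : ℕ) : diagQ l (i + (0 + 2)) 0 = 1 + l := by
  unfold diagQ; split_ifs <;> first | rfl | omega | (exfalso; assumption)

lemma diagQ_tail1 (l : ℝ) (i : ℕ) : diagQ l (i + (1 + 2)) 1 = 2 + l := by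
  unfold diagQ; split_ifs <;> first | rfl | omega | (exfalso; assumption)

lemma diagQ_tailGen (l : ℝ) (m i : ℕ) : diagQ l (i + (m + 2 + 2)) (m + 2) = 2 + l := by
  unfold diagQ; split_ifs <;> first | rfl | omega | (exfalso; assumption)

lemma diagQ_d1 (l : ℝ) (m : ℕ) : diagQ l (m + 1) (m + 2) = 2 := by
  unfold diagQ; split_ifs <;> first | rfl | omega | (exfalso; assumption)

lemma diagQ_d2 (l : ℝ) (m : ℕ) :
    diagQ l (m + 2) (m + 2) = -(2 + 2 * ((m : ℝ) + 2) + ((m : ℝ) + 2) * l) := by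
  unfold diagQ; split_ifs <;> first | omega | (exfalso; assumption) | (push_cast; ring)

lemma diagQ_d3 (l : ℝ) (m : ℕ) : diagQ l (m + 3) (m + 2) = 3 + l := by
  unfold diagQ; split_ifs <;> first | rfl | omega | (exfalso; assumption)

lemma diagQ_d0 (l : ℝ) (m i : ℕ) (hi : i < m + 1) : diagQ l i (m + 2) = 0 := by
  unfold diagQ; split_ifs <;> first | rfl | omega | (exfalso; assumption)

/-- Any nonnegative summable probability vector `π` that is stationary for
the front process on the ladder with diagonals (each column series converging absolutely
to `0`) satisfies the stated explicit relations and three-term recursion. -/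
theorem stmt_9 (l : ℝ) (hl : 0 < l) (π : ℕ → ℝ)
    (hnonneg : ∀ n, 0 ≤ π n) (hsummable : Summable π) (hsum : ∑' n, π n = 1)
    (hstatSummable : ∀ j : ℕ, Summable (fun i => π i * diagQ l i j))
    (hstat : ∀ j : ℕ, ∑' i, π i * diagQ l i j = 0) :
    π 1 = (5 + l) * π 0 - (1 + l) ∧
    π 2 = (28 + 17 * l + 2 * l ^ 2) * π 0 - (8 + 9 * l + 2 * l ^ 2) ∧
    π 3 = (226 + 226 * l + 68 * l ^ 2 + 6 * l ^ 3) * π 0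
          - (66 + 98 * l + 44 * l ^ 2 + 6 * l ^ 3) ∧
    ∀ n : ℕ, 4 ≤ n →
      π n = ((2 + l) * (n : ℝ) + 3) * π (n - 1)
            - ((2 + l) * ((n : ℝ) - 2) + 4) * π (n - 2) + 2 * π (n - 3) := by
  -- column 0
  have hc0 : ∀ i : ℕ, diagQ l (i + (0 + 2)) 0 = 1 + l := diagQ_tail0 l
  have E0 := diagQ_colEq l π hsummable hsum 0 (hstatSummable 0) (hstat 0) (1 + l) hc0
  have hS0 : ∑ i ∈ Finset.range (0 + 2), π i * diagQ l i 0
      = π 0 * (-4) + π 1 * (2 + l) := by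
    norm_num [Finset.sum_range_succ, diagQ]
  rw [hS0] at E0
  have hR0 : ∑ i ∈ Finset.range (0 + 2), π i = π 0 + π 1 := by
    simp [Finset.sum_range_succ]
  rw [hR0] at E0
  have hp1 : π 1 = (5 + l) * π 0 - (1 + l) := by linear_combination E0
  -- column 1
  have hc1 : ∀ i : ℕ, diagQ l (i + (1 + 2)) 1 = 2 + l := diagQ_tail1 l
  have E1 := diagQ_colEq l π hsummable hsum 1 (hstatSummable 1) (hstat 1) (2 + l) hc1
  have hS1 : ∑ i ∈ Finset.range (1 + 2), π i * diagQ l i 1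
      = π 0 * 4 + π 1 * (-(4 + l)) + π 2 * (3 + l) := by
    norm_num [Finset.sum_range_succ, diagQ]
  rw [hS1] at E1
  have hR1 : ∑ i ∈ Finset.range (1 + 2), π i = π 0 + π 1 + π 2 := by
    simp [Finset.sum_range_succ]
  rw [hR1] at E1
  have hp2 : π 2 = (28 + 17 * l + 2 * l ^ 2) * π 0 - (8 + 9 * l + 2 * l ^ 2) := by
    linear_combination E1 + (6 + 2 * l) * hp1
  -- general column equation for columns `m+2`
  have eqGen : ∀ m : ℕ,
      2 * π (m + 1) - (2 + 2 * ((m : ℝ) + 2) + ((m : ℝ) + 2) * l) * π (m + 2)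
        + (3 + l) * π (m + 3)
        + (2 + l) * (1 - ∑ i ∈ Finset.range (m + 4), π i) = 0 := by
    intro m
    have hc : ∀ i : ℕ, diagQ l (i + (m + 2 + 2)) (m + 2) = 2 + l := diagQ_tailGen l m
    have E := diagQ_colEq l π hsummable hsum (m + 2) (hstatSummable (m + 2))
      (hstat (m + 2)) (2 + l) hc
    have d1 := diagQ_d1 l m
    have d2 := diagQ_d2 l m
    have d3 := diagQ_d3 l m
    have hsplit : ∑ i ∈ Finset.range (m + 2 + 2), π i * diagQ l i (m + 2)
        = 2 * π (m + 1)
          - (2 + 2 * ((m : ℝ) + 2) + ((m : ℝ) + 2) * l) * π (m + 2)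
          + (3 + l) * π (m + 3) := by
      have d0 : ∀ i ∈ Finset.range (m + 1), π i * diagQ l i (m + 2) = 0 := by
        intro i hi
        rw [Finset.mem_range] at hi
        rw [diagQ_d0 l m i hi, mul_zero]
      rw [show m + 2 + 2 = (m + 1) + 1 + 1 + 1 from rfl, Finset.sum_range_succ,
        Finset.sum_range_succ, Finset.sum_range_succ, Finset.sum_eq_zero d0]
      rw [d1, d2, d3]
      ring
    rw [hsplit] at E
    simp only [show m + 2 + 2 = m + 4 from rfl] at E
    linear_combination E
  -- column 2 gives π 3
  have E2 := eqGen 0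
  norm_num [Finset.sum_range_succ] at E2
  have hp3 : π 3 = (226 + 226 * l + 68 * l ^ 2 + 6 * l ^ 3) * π 0
      - (66 + 98 * l + 44 * l ^ 2 + 6 * l ^ 3) := by
    linear_combination E2 + l * hp1 + (8 + 3 * l) * hp2
  refine ⟨hp1, hp2, hp3, ?_⟩
  -- three-term recursion
  intro n hn
  obtain ⟨m, rfl⟩ : ∃ m, n = m + 4 := ⟨n - 4, by omega⟩
  have h1 := eqGen m
  have h2 := eqGen (m + 1)
  simp only [show m + 1 + 1 = m + 2 from rfl, show m + 1 + 2 = m + 3 from rfl,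
    show m + 1 + 3 = m + 4 from rfl, show m + 1 + 4 = m + 5 from rfl] at h2
  push_cast at h2
  have hS : ∑ i ∈ Finset.range (m + 5), π i
      = ∑ i ∈ Finset.range (m + 4), π i + π (m + 4) := by
    rw [show m + 5 = (m + 4) + 1 from rfl, Finset.sum_range_succ]
  rw [hS] at h2
  simp only [show m + 4 - 1 = m + 3 from rfl, show m + 4 - 2 = m + 2 from rfl,
    show m + 4 - 3 = m + 1 from rfl]
  push_cast
  linear_combination h2 - h1
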